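/- arXiv:2310.19025 — 6 statements merged into one kernel-verified Lean document; each statement's English description precedes it below -/
import Mathlib

section
/- Let K ≥ 1 and T ≥ 1 be integers, let Π be a finite nonempty set of policies, and for each t ∈ {1,…,T} let y_t : Π → {1,…,K} be a fixed map. Let γ ∈ (0,1] satisfy γ > K·log(|Π|)/(2T). Let ε_1,…,ε_T be i.i.d. one-hot Rademacher random vectors in ℝ^K, and let Z_1,…,Z_T be i.i.d. random variables taking the value K/γ with probability γ and 0 with probability 1−γ, with (Z_t) independent of (ε_t). Then E[ sup_{π ∈ Π} Σ_{t=1}^T Z_t · ε_t(y_t(π)) ] ≤ 2·√( K·T·log(|Π|) / γ ). -/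
open Finset

private lemma aux_sinh_le {x : ℝ} (hx : 0 ≤ x) : Real.sinh x ≤ x * Real.cosh x := by
  have hd : ∀ z : ℝ, HasDerivAt (fun x => x * Real.cosh x - Real.sinh x)
      ((1 * Real.cosh z + z * Real.sinh z) - Real.cosh z) z := fun z =>
    ((hasDerivAt_id z).mul (Real.hasDerivAt_cosh z)).sub (Real.hasDerivAt_sinh z)
  have h : MonotoneOn (fun x => x * Real.cosh x - Real.sinh x) (Set.Ici 0) := by
    apply monotoneOn_of_deriv_nonneg (convex_Ici 0)
    · exact ((continuous_id.mul Real.continuous_cosh).sub Real.continuous_sinh).continuousOn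
    · intro z _
      exact (hd z).differentiableAt.differentiableWithinAt
    · intro z hz
      rw [(hd z).deriv]
      rw [interior_Ici, Set.mem_Ioi] at hz
      nlinarith [Real.sinh_nonneg_iff.2 hz.le]
  have := h (Set.self_mem_Ici) (Set.mem_Ici.2 hx) hx
  simp at this
  linarith

private lemma aux_cosh_le {x : ℝ} (hx2 : x ^ 2 ≤ 2) : Real.cosh x ≤ 1 + x ^ 2 := by
  wlog hx : 0 ≤ x generalizing x
  · have := this (x := -x) (by nlinarith) (by linarith)
    simpa using this
  have h1 : Real.cosh x = 2 * Real.sinh (x / 2) ^ 2 + 1 := by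
    have h3 := Real.cosh_two_mul (x / 2)
    have h2 := Real.cosh_sq (x / 2)
    rw [show 2 * (x/2) = x by ring] at h3
    rw [h3, h2]; ring
  have hs := aux_sinh_le (x := x / 2) (by linarith)
  have hc := Real.cosh_sq (x / 2)
  have hsn : 0 ≤ Real.sinh (x/2) := Real.sinh_nonneg_iff.2 (by linarith)
  nlinarith

private lemma aux_fin_sum {K : ℕ} (j : Fin K) (cj c0 : ℝ) :
    ∑ i : Fin K, (if i = j then cj else c0) = cj + ((K:ℝ) - 1) * c0 := by
  have h : ∀ i : Fin K, (if i = j then cj else c0) = (if i = j then cj - c0 else 0) + c0 := by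
    intro i; split <;> ring
  simp only [h, Finset.sum_add_distrib, Finset.sum_ite_eq', Finset.mem_univ, if_true,
    Finset.sum_const, Finset.card_univ, Fintype.card_fin, nsmul_eq_mul]
  ring

private lemma aux_wsum (K : ℕ) (hK : 1 ≤ K) (γ : ℝ) :
    ∑ a : (Fin K × Bool) × Bool, (1 / (2 * (K:ℝ))) * (if a.2 then γ else 1 - γ) = 1 := by
  have hK0 : ((K:ℝ)) ≠ 0 := by positivity
  rw [Fintype.sum_prod_type, Fintype.sum_prod_type]
  simp only [Fintype.sum_bool, Bool.false_eq_true, if_true, if_false, Finset.sum_const, Finset.card_univ,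
    Fintype.card_fin, Fintype.card_bool, nsmul_eq_mul]
  field_simp
  ring

private lemma aux_mean (K : ℕ) (γ : ℝ) (j : Fin K) :
    ∑ a : (Fin K × Bool) × Bool, ((1 / (2 * (K:ℝ))) * (if a.2 then γ else 1 - γ)) *
      ((if a.2 then (K:ℝ)/γ else 0) *
        (if a.1.1 = j then (if a.1.2 then (1:ℝ) else -1) else 0)) = 0 := by
  rw [Fintype.sum_prod_type, Fintype.sum_prod_type]
  simp only [Fintype.sum_bool, Bool.false_eq_true, if_true, if_false]
  have h : ∀ x : Fin K,
      (1 / (2 * (K:ℝ)) * γ * ((K:ℝ) / γ * if x = j then (1:ℝ) else 0) +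
          1 / (2 * (K:ℝ)) * (1 - γ) * (0 * if x = j then (1:ℝ) else 0) +
        (1 / (2 * (K:ℝ)) * γ * ((K:ℝ) / γ * if x = j then (-1:ℝ) else 0) +
          1 / (2 * (K:ℝ)) * (1 - γ) * (0 * if x = j then (-1:ℝ) else 0))) =
      if x = j then 0 else 0 := by
    intro x; by_cases hx : x = j <;> simp [hx] <;> ring
  rw [Finset.sum_congr rfl (fun x _ => h x), aux_fin_sum]
  ring

private lemma aux_mgf (K : ℕ) (hK : 1 ≤ K) (γ : ℝ) (j : Fin K) (l : ℝ) :
    ∑ a : (Fin K × Bool) × Bool, ((1 / (2 * (K:ℝ))) * (if a.2 then γ else 1 - γ)) *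
      Real.exp (l * ((if a.2 then (K:ℝ)/γ else 0) *
        (if a.1.1 = j then (if a.1.2 then (1:ℝ) else -1) else 0)))
      = 1 + (γ / K) * (Real.cosh (l * ((K:ℝ)/γ)) - 1) := by
  have hK0 : ((K:ℝ)) ≠ 0 := by positivity
  rw [Fintype.sum_prod_type, Fintype.sum_prod_type]
  simp only [Fintype.sum_bool, Bool.false_eq_true, if_true, if_false]
  have h : ∀ x : Fin K,
      (1 / (2 * (K:ℝ)) * γ * Real.exp (l * ((K:ℝ) / γ * if x = j then 1 else 0)) +
          1 / (2 * (K:ℝ)) * (1 - γ) * Real.exp (l * (0 * if x = j then 1 else 0)) +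
        (1 / (2 * (K:ℝ)) * γ * Real.exp (l * ((K:ℝ) / γ * if x = j then -1 else 0)) +
          1 / (2 * (K:ℝ)) * (1 - γ) * Real.exp (l * (0 * if x = j then -1 else 0)))) =
      if x = j then
        (γ / (2 * (K:ℝ))) * (Real.exp (l * ((K:ℝ)/γ)) + Real.exp (-(l * ((K:ℝ)/γ)))) + (1 - γ)/(K:ℝ)
      else 1/(K:ℝ) := by
    intro x
    by_cases hx : x = j <;> simp [hx, Real.exp_zero, mul_comm] <;> ring_nf
  rw [Finset.sum_congr rfl (fun x _ => h x), aux_fin_sum, Real.cosh_eq]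
  field_simp
  ring

set_option maxHeartbeats 1600000 in
/-- Theorem 4.3 of the paper, Rademacher averages bound.
The i.i.d. randomness is modeled by the canonical finite sample space
`Fin T → (Fin K × Bool) × Bool`: at round `t`, the pair `(ω t).1 : Fin K × Bool`
determines the one-hot Rademacher vector `ε_t` (a uniformly random coordinate
and a uniform random sign), and `(ω t).2 : Bool` determines `Z_t`
(`K/γ` with probability `γ`, `0` otherwise).  The expectation is the weighted
sum over the sample space with the product weights. -/
theorem stmt_0 (K T : ℕ) (hK : 1 ≤ K) (hT : 1 ≤ T)
    (Pol : Type) [Fintype Pol] [Nonempty Pol]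
    (y : Fin T → Pol → Fin K)
    (γ : ℝ) (hγ0 : 0 < γ) (hγ1 : γ ≤ 1)
    (hγ : γ > (K : ℝ) * Real.log (Fintype.card Pol) / (2 * T)) :
    ∑ ω : Fin T → (Fin K × Bool) × Bool,
        (∏ t : Fin T, (1 / (2 * (K : ℝ))) * (if (ω t).2 then γ else 1 - γ)) *
          (univ.sup' univ_nonempty fun π : Pol =>
            ∑ t : Fin T,
              (if (ω t).2 then (K : ℝ) / γ else 0) *
                (if (ω t).1.1 = y t π then (if (ω t).1.2 then (1 : ℝ) else -1) else 0))
      ≤ 2 * Real.sqrt ((K : ℝ) * T * Real.log (Fintype.card Pol) / γ) := by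
  classical
  have hK0 : (0:ℝ) < (K:ℝ) := by exact_mod_cast hK
  have hT0 : (0:ℝ) < (T:ℝ) := by exact_mod_cast hT
  set w : (Fin K × Bool) × Bool → ℝ :=
    fun a => (1 / (2 * (K : ℝ))) * (if a.2 then γ else 1 - γ) with hw
  set g : Fin T → Pol → (Fin K × Bool) × Bool → ℝ :=
    fun t π a => (if a.2 then (K : ℝ) / γ else 0) *
      (if a.1.1 = y t π then (if a.1.2 then (1 : ℝ) else -1) else 0) with hg
  have hw0 : ∀ a, 0 ≤ w a := by
    intro a
    rw [hw]
    have : (0:ℝ) ≤ 1 / (2 * (K:ℝ)) := by positivity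
    dsimp only
    split <;> nlinarith
  have hW0 : ∀ ω : Fin T → (Fin K × Bool) × Bool, 0 ≤ ∏ t, w (ω t) :=
    fun ω => Finset.prod_nonneg fun t _ => hw0 (ω t)
  have hWsum : ∑ ω : Fin T → (Fin K × Bool) × Bool, ∏ t, w (ω t) = 1 := by
    have h1 : ∑ a : (Fin K × Bool) × Bool, w a = 1 := aux_wsum K hK γ
    rw [← Fintype.prod_sum (fun (_ : Fin T) (a : (Fin K × Bool) × Bool) => w a)]
    simp only [h1, Finset.prod_const_one]
  set N := Fintype.card Pol with hN
  have hN1 : 1 ≤ N := Fintype.card_pos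
  set L := Real.log N with hL
  have hL0 : 0 ≤ L := Real.log_natCast_nonneg N
  -- the random variable: sup over policies
  set S : Pol → (Fin T → (Fin K × Bool) × Bool) → ℝ :=
    fun π ω => ∑ t, g t π (ω t) with hS
  set M : (Fin T → (Fin K × Bool) × Bool) → ℝ :=
    fun ω => univ.sup' univ_nonempty (fun π => S π ω) with hM
  show ∑ ω, (∏ t, w (ω t)) * M ω ≤ 2 * Real.sqrt ((K : ℝ) * T * L / γ)
  -- key bound for admissible λ
  have key : ∀ l : ℝ, 0 < l → (l * ((K:ℝ)/γ))^2 ≤ 2 →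
      ∑ ω, (∏ t, w (ω t)) * M ω ≤ (L + (T:ℝ) * (l^2 * (K:ℝ)/γ)) / l := by
    intro l hl hlx
    have step1 : Real.exp (l * ∑ ω, (∏ t, w (ω t)) * M ω)
        ≤ ∑ ω, (∏ t, w (ω t)) * Real.exp (l * M ω) := by
      have harg : l * ∑ ω, (∏ t, w (ω t)) * M ω
          = ∑ ω, (∏ t, w (ω t)) • (l * M ω) := by
        rw [Finset.mul_sum]
        exact Finset.sum_congr rfl fun ω _ => by simp [smul_eq_mul]; ring
      rw [harg]
      simpa [smul_eq_mul] using
        convexOn_exp.map_sum_le (fun ω _ => hW0 ω) hWsum (fun ω _ => Set.mem_univ _)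
    have step2 : ∀ ω, Real.exp (l * M ω) ≤ ∑ π : Pol, Real.exp (l * S π ω) := by
      intro ω
      obtain ⟨π₀, -, hπ₀⟩ := Finset.exists_mem_eq_sup' univ_nonempty (fun π => S π ω)
      rw [hM]
      dsimp only
      rw [hπ₀]
      exact Finset.single_le_sum (f := fun π => Real.exp (l * S π ω))
        (fun π _ => (Real.exp_pos _).le) (Finset.mem_univ π₀)
    have step3 : ∑ ω, (∏ t, w (ω t)) * Real.exp (l * M ω)
        ≤ ∑ π : Pol, ∑ ω, (∏ t, w (ω t)) * Real.exp (l * S π ω) := by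
      rw [Finset.sum_comm]
      exact Finset.sum_le_sum fun ω _ => by
        calc (∏ t, w (ω t)) * Real.exp (l * M ω)
            ≤ (∏ t, w (ω t)) * ∑ π : Pol, Real.exp (l * S π ω) :=
              mul_le_mul_of_nonneg_left (step2 ω) (hW0 ω)
          _ = ∑ π : Pol, (∏ t, w (ω t)) * Real.exp (l * S π ω) := Finset.mul_sum _ _ _
    have step4 : ∀ π : Pol, ∑ ω, (∏ t, w (ω t)) * Real.exp (l * S π ω)
        = ∏ t, ∑ a : (Fin K × Bool) × Bool, w a * Real.exp (l * g t π a) := by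
      intro π
      rw [Fintype.prod_sum (fun t (a : (Fin K × Bool) × Bool) => w a * Real.exp (l * g t π a))]
      refine Finset.sum_congr rfl fun ω _ => ?_
      calc (∏ t, w (ω t)) * Real.exp (l * S π ω)
          = (∏ t, w (ω t)) * ∏ t, Real.exp (l * g t π (ω t)) := by
            rw [← Real.exp_sum]
            congr 1
            rw [hS]
            dsimp only
            rw [Finset.mul_sum]
        _ = ∏ t, (w (ω t) * Real.exp (l * g t π (ω t))) := (Finset.prod_mul_distrib).symm
    have step5 : ∀ t π, ∑ a : (Fin K × Bool) × Bool, w a * Real.exp (l * g t π a)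
        ≤ Real.exp (l^2 * (K:ℝ)/γ) := by
      intro t π
      rw [hw, hg]
      rw [aux_mgf K hK γ (y t π) l]
      have h1 : Real.cosh (l * ((K:ℝ)/γ)) ≤ 1 + (l * ((K:ℝ)/γ))^2 := aux_cosh_le hlx
      have h2 : (0:ℝ) ≤ γ / K := by positivity
      have h3 : 1 + (γ / (K:ℝ)) * (Real.cosh (l * ((K:ℝ)/γ)) - 1)
          ≤ 1 + (γ / (K:ℝ)) * (l * ((K:ℝ)/γ))^2 := by nlinarith
      have h4 : (γ / (K:ℝ)) * (l * ((K:ℝ)/γ))^2 = l^2 * (K:ℝ)/γ := by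
        field_simp
      calc 1 + (γ / (K:ℝ)) * (Real.cosh (l * ((K:ℝ)/γ)) - 1)
          ≤ 1 + l^2 * (K:ℝ)/γ := by rw [← h4]; exact h3
        _ ≤ Real.exp (l^2 * (K:ℝ)/γ) := by
            have := Real.add_one_le_exp (l^2 * (K:ℝ)/γ)
            linarith
    have step6 : ∀ π : Pol, ∑ ω, (∏ t, w (ω t)) * Real.exp (l * S π ω)
        ≤ Real.exp ((T:ℝ) * (l^2 * (K:ℝ)/γ)) := by
      intro π
      rw [step4 π]
      calc ∏ t, ∑ a : (Fin K × Bool) × Bool, w a * Real.exp (l * g t π a)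
          ≤ ∏ (_ : Fin T), Real.exp (l^2 * (K:ℝ)/γ) := by
            refine Finset.prod_le_prod (fun t _ => ?_) (fun t _ => step5 t π)
            exact Finset.sum_nonneg fun a _ => mul_nonneg (hw0 a) (Real.exp_pos _).le
        _ = Real.exp ((T:ℝ) * (l^2 * (K:ℝ)/γ)) := by
            rw [Finset.prod_const, Finset.card_univ, Fintype.card_fin, ← Real.exp_nat_mul]
    have total : Real.exp (l * ∑ ω, (∏ t, w (ω t)) * M ω)
        ≤ Real.exp (L + (T:ℝ) * (l^2 * (K:ℝ)/γ)) := by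
      calc Real.exp (l * ∑ ω, (∏ t, w (ω t)) * M ω)
          ≤ ∑ π : Pol, ∑ ω, (∏ t, w (ω t)) * Real.exp (l * S π ω) := step1.trans step3
        _ ≤ ∑ (_ : Pol), Real.exp ((T:ℝ) * (l^2 * (K:ℝ)/γ)) :=
            Finset.sum_le_sum fun π _ => step6 π
        _ = (N:ℝ) * Real.exp ((T:ℝ) * (l^2 * (K:ℝ)/γ)) := by
            rw [Finset.sum_const, Finset.card_univ, nsmul_eq_mul, hN]
        _ = Real.exp (L + (T:ℝ) * (l^2 * (K:ℝ)/γ)) := by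
            rw [Real.exp_add, hL, Real.exp_log (by exact_mod_cast hN1 : (0:ℝ) < (N:ℝ))]
    have h5 := Real.exp_le_exp.mp total
    rw [le_div_iff₀ hl]
    calc (∑ ω, (∏ t, w (ω t)) * M ω) * l = l * ∑ ω, (∏ t, w (ω t)) * M ω := mul_comm _ _
      _ ≤ L + (T:ℝ) * (l^2 * (K:ℝ)/γ) := h5
  by_cases hN2 : N = 1
  · -- degenerate case: a single policy, expectation is zero
    haveI hpol : Subsingleton Pol :=
      Fintype.card_le_one_iff_subsingleton.mp (le_of_eq hN2)
    have π₀ : Pol := Classical.arbitrary Pol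
    have hsup : ∀ ω, M ω = S π₀ ω := by
      intro ω
      rw [hM]
      dsimp only
      rw [Finset.sup'_congr univ_nonempty rfl
        (fun π _ => by rw [Subsingleton.elim π π₀] : ∀ π ∈ univ, S π ω = S π₀ ω)]
      exact Finset.sup'_const _ _
    have hzero : ∀ t : Fin T, ∑ ω : Fin T → (Fin K × Bool) × Bool,
        (∏ t', w (ω t')) * g t π₀ (ω t) = 0 := by
      intro t
      have hterm : ∀ ω : Fin T → (Fin K × Bool) × Bool, (∏ t', w (ω t')) * g t π₀ (ω t)
          = ∏ t', (w (ω t') * (if t' = t then g t π₀ (ω t') else 1)) := by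
        intro ω
        rw [Finset.prod_mul_distrib (f := fun t' => w (ω t'))
          (g := fun t' => (if t' = t then g t π₀ (ω t') else 1)),
          Finset.prod_ite_eq' univ t (fun t' => g t π₀ (ω t'))]
        simp
      rw [Finset.sum_congr rfl (fun ω _ => hterm ω),
        ← Fintype.prod_sum (fun t' (a : (Fin K × Bool) × Bool) =>
          w a * (if t' = t then g t π₀ a else 1))]
      apply Finset.prod_eq_zero (Finset.mem_univ t)
      simp only [if_pos rfl]
      exact aux_mean K γ (y t π₀)
    have hmain : ∑ ω : Fin T → (Fin K × Bool) × Bool, (∏ t, w (ω t)) * M ω = 0 := by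
      calc ∑ ω : Fin T → (Fin K × Bool) × Bool, (∏ t, w (ω t)) * M ω
          = ∑ ω : Fin T → (Fin K × Bool) × Bool, ∑ t, (∏ t', w (ω t')) * g t π₀ (ω t) := by
            refine Finset.sum_congr rfl fun ω _ => ?_
            rw [hsup ω, hS]
            dsimp only
            rw [Finset.mul_sum]
        _ = ∑ t, ∑ ω : Fin T → (Fin K × Bool) × Bool, (∏ t', w (ω t')) * g t π₀ (ω t) :=
            Finset.sum_comm
        _ = 0 := by simp [hzero]
    rw [hmain]
    positivity
  · have hN2' : 2 ≤ N := by omega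
    have hLpos : 0 < L := by
      rw [hL]
      apply Real.log_pos
      exact_mod_cast hN2'
    set l := Real.sqrt (γ * L / ((T:ℝ) * K)) with hldef
    have hargpos : 0 < γ * L / ((T:ℝ) * K) := by positivity
    have hl0 : 0 < l := Real.sqrt_pos.mpr hargpos
    have hl2 : l^2 = γ * L / ((T:ℝ) * K) := Real.sq_sqrt hargpos.le
    have hKL : (K:ℝ) * L < 2 * (T:ℝ) * γ := by
      have h8 := (div_lt_iff₀ (by positivity : (0:ℝ) < 2 * (T:ℝ))).mp hγ
      nlinarith
    have hconstr : (l * ((K:ℝ)/γ))^2 ≤ 2 := by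
      rw [mul_pow, hl2]
      have h9 : (γ * L / ((T:ℝ) * K)) * ((K:ℝ)/γ)^2 = (K:ℝ) * L / ((T:ℝ) * γ) := by
        field_simp
      rw [h9, div_le_iff₀ (by positivity : (0:ℝ) < (T:ℝ) * γ)]
      nlinarith
    have hb := key l hl0 hconstr
    have hTl : (T:ℝ) * (l^2 * (K:ℝ)/γ) = L := by
      rw [hl2]
      field_simp
    rw [hTl] at hb
    have hfin : (L + L)/l = 2 * Real.sqrt ((K:ℝ) * T * L / γ) := by
      have h7 : (K:ℝ) * T * L / γ = L^2 / (γ * L / ((T:ℝ) * K)) := by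
        rw [eq_div_iff (by positivity : γ * L / ((T:ℝ) * K) ≠ 0)]
        field_simp
      rw [h7, Real.sqrt_div (by positivity : (0:ℝ) ≤ L^2), Real.sqrt_sq hLpos.le, ← hldef]
      ring
    rw [hfin] at hb
    exact hb
end

section
/- Let K ≥ 1 and T ≥ 1 be integers, let Π be a finite nonempty set of policies, and for each t ∈ {1,…,T} let y_t : Π → {1,…,K} be a fixed map. Let γ ∈ (0,1], let ε_1,…,ε_T be i.i.d. one-hot Rademacher random vectors in ℝ^K, and let Z_1,…,Z_T be i.i.d. random variables taking the value K/γ with probability γ and 0 with probability 1−γ, independent of (ε_t). Then for every real λ with 0 < λ ≤ √2·γ/K, one has E[ sup_{π ∈ Π} Σ_{t=1}^T Z_t · ε_t(y_t(π)) ] ≤ log(|Π|)/λ + T·K·λ/γ. -/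
open Finset

lemma coshB {x : ℝ} (hx0 : 0 ≤ x) (hx2 : x ^ 2 ≤ 2) :
    Real.exp x + Real.exp (-x) ≤ 2 + 2 * x ^ 2 := by
  set y := x / 2 with hy
  have hy0 : 0 ≤ y := by positivity
  have hy2 : y ^ 2 ≤ 1 / 2 := by rw [hy]; nlinarith
  have hy1 : y ≤ 1 := by nlinarith
  have hb1 : Real.exp y ≤ (1 + y + y ^ 2 / 2 + y ^ 3 / 6) + y ^ 4 * 5 / 96 := by
    have := Real.exp_bound' hy0 hy1 (n := 4) (by norm_num)
    calc Real.exp y ≤ (∑ m ∈ Finset.range 4, y ^ m / m.factorial) +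
        y ^ 4 * (4 + 1) / (Nat.factorial 4 * 4) := this
      _ = (1 + y + y ^ 2 / 2 + y ^ 3 / 6) + y ^ 4 * 5 / 96 := by
          simp [Finset.sum_range_succ, Nat.factorial]; ring
  have hb2 : Real.exp (-y) ≤ (1 - y + y ^ 2 / 2 - y ^ 3 / 6) + y ^ 4 * 5 / 96 := by
    have habs : |(-y)| ≤ 1 := by rw [abs_neg, abs_of_nonneg hy0]; exact hy1
    have := Real.exp_bound habs (n := 4) (by norm_num)
    have h2 : |Real.exp (-y) - ∑ m ∈ Finset.range 4, (-y) ^ m / m.factorial| ≤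
        y ^ 4 * 5 / 96 := by
      calc _ ≤ |(-y)| ^ 4 * ((4 : ℕ).succ / ((4 : ℕ).factorial * 4)) := this
        _ = y ^ 4 * 5 / 96 := by
            rw [abs_neg, abs_of_nonneg hy0]; norm_num [Nat.factorial]; ring
    have h3 : ∑ m ∈ Finset.range 4, (-y) ^ m / m.factorial
        = 1 - y + y ^ 2 / 2 - y ^ 3 / 6 := by
      simp [Finset.sum_range_succ, Nat.factorial]; ring
    rw [h3] at h2
    linarith [(abs_sub_le_iff.1 h2).1]
  have hs0 : 0 ≤ Real.exp y + Real.exp (-y) := by positivity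
  have hsq : Real.exp x + Real.exp (-x)
      = (Real.exp y + Real.exp (-y)) ^ 2 - 2 := by
    have h1 : Real.exp x = Real.exp y * Real.exp y := by
      rw [← Real.exp_add]; congr 1; rw [hy]; ring
    have h2 : Real.exp (-x) = Real.exp (-y) * Real.exp (-y) := by
      rw [← Real.exp_add]; congr 1; rw [hy]; ring
    have h3 : Real.exp y * Real.exp (-y) = 1 := by
      rw [← Real.exp_add]; simp
    rw [h1, h2]
    linear_combination (-2 : ℝ) * h3
  have hs : Real.exp y + Real.exp (-y) ≤ 2 + y ^ 2 + y ^ 4 * 5 / 48 := by linarith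
  have hx4 : x ^ 2 = 4 * y ^ 2 := by rw [hy]; ring
  have h4 : y ^ 4 ≤ y ^ 2 / 2 := by nlinarith [sq_nonneg y]
  have h6 : y ^ 6 ≤ y ^ 4 / 2 := by nlinarith [sq_nonneg (y ^ 2)]
  have h8 : y ^ 8 ≤ y ^ 6 / 2 := by nlinarith [sq_nonneg (y ^ 3)]
  have hsB := pow_le_pow_left₀ hs0 hs 2
  rw [hsq, hx4]
  nlinarith [hsB, h4, h6, h8, sq_nonneg y]
set_option maxHeartbeats 1000000 in

set_option maxHeartbeats 1000000 in
/-- key intermediate inequality in the proof of Theorem 4.3.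
Same sample-space model as in Statement 0: `(ω t).1 : Fin K × Bool` determines
the one-hot Rademacher vector `ε_t` and `(ω t).2 : Bool` determines `Z_t`. -/
theorem stmt_1 (K T : ℕ) (hK : 1 ≤ K) (hT : 1 ≤ T)
    (Pol : Type) [Fintype Pol] [Nonempty Pol]
    (y : Fin T → Pol → Fin K)
    (γ : ℝ) (hγ0 : 0 < γ) (hγ1 : γ ≤ 1) :
    ∀ lam : ℝ, 0 < lam → lam ≤ Real.sqrt 2 * γ / K →
      ∑ ω : Fin T → (Fin K × Bool) × Bool,
          (∏ t : Fin T, (1 / (2 * (K : ℝ))) * (if (ω t).2 then γ else 1 - γ)) *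
            (univ.sup' univ_nonempty fun π : Pol =>
              ∑ t : Fin T,
                (if (ω t).2 then (K : ℝ) / γ else 0) *
                  (if (ω t).1.1 = y t π then (if (ω t).1.2 then (1 : ℝ) else -1) else 0))
        ≤ Real.log (Fintype.card Pol) / lam + (T : ℝ) * K * lam / γ := by
  intro lam hlam hlamle
  have hK0 : (0 : ℝ) < K := by exact_mod_cast hK
  set p : ((Fin K × Bool) × Bool) → ℝ := fun a => (1 / (2 * (K : ℝ))) * (if a.2 then γ else 1 - γ) with hp
  set f : Fin T → Pol → ((Fin K × Bool) × Bool) → ℝ := fun t π a =>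
    (if a.2 then (K : ℝ) / γ else 0) *
      (if a.1.1 = y t π then (if a.1.2 then (1 : ℝ) else -1) else 0) with hf
  set w : (Fin T → (Fin K × Bool) × Bool) → ℝ := fun ω => ∏ t, p (ω t) with hw
  set S : (Fin T → (Fin K × Bool) × Bool) → ℝ := fun ω =>
    univ.sup' univ_nonempty fun π : Pol => ∑ t, f t π (ω t) with hS
  -- weights
  have hp0 : ∀ a : (Fin K × Bool) × Bool, 0 ≤ p a := by
    intro a
    have : (0:ℝ) ≤ (if a.2 then γ else 1 - γ) := by
      split <;> linarith
    positivity
  have hpsum : ∑ a : (Fin K × Bool) × Bool, p a = 1 := by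
    rw [Fintype.sum_prod_type]
    simp only [hp, Fintype.sum_bool, if_true, if_false, Finset.sum_const,
      Finset.card_univ, Fintype.card_prod, Fintype.card_fin, Fintype.card_bool,
      nsmul_eq_mul]
    push_cast
    field_simp
    rw [Finset.sum_const, Finset.card_univ, Fintype.card_prod, Fintype.card_fin, Fintype.card_bool, nsmul_eq_mul]
    push_cast
    field_simp
    ring
  have hw0 : ∀ ω, 0 ≤ w ω := fun ω => Finset.prod_nonneg fun t _ => hp0 _
  have hwsum : ∑ ω : Fin T → (Fin K × Bool) × Bool, w ω = 1 := by
    have h := Finset.prod_univ_sum (fun _ : Fin T => (univ : Finset ((Fin K × Bool) × Bool))) (fun _ a => p a)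
    rw [Fintype.piFinset_univ] at h
    rw [hw, ← h, hpsum, Finset.prod_const_one]
  -- restate the goal
  show ∑ ω : Fin T → (Fin K × Bool) × Bool, w ω * S ω ≤ _
  -- Jensen's inequality for exp
  have hjensen : Real.exp (∑ ω : Fin T → (Fin K × Bool) × Bool, w ω * (lam * S ω)) ≤
      ∑ ω : Fin T → (Fin K × Bool) × Bool, w ω * Real.exp (lam * S ω) := by
    have h := convexOn_exp.map_sum_le (t := (univ : Finset (Fin T → (Fin K × Bool) × Bool)))
      (w := w) (p := fun ω => lam * S ω) (fun i _ => hw0 i) hwsum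
      (fun i _ => Set.mem_univ _)
    simpa [smul_eq_mul] using h
  -- bound the sup' by a sum over policies
  have hstep3 : ∀ ω : Fin T → (Fin K × Bool) × Bool, Real.exp (lam * S ω) ≤
      ∑ π : Pol, Real.exp (lam * ∑ t, f t π (ω t)) := by
    intro ω
    obtain ⟨π₀, -, hπ₀⟩ := Finset.exists_mem_eq_sup' (univ_nonempty)
      (fun π : Pol => ∑ t, f t π (ω t))
    have hSω : S ω = ∑ t, f t π₀ (ω t) := hπ₀
    rw [hSω]
    exact Finset.single_le_sum
      (f := fun π : Pol => Real.exp (lam * ∑ t, f t π (ω t)))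
      (fun π _ => (Real.exp_pos _).le) (mem_univ π₀)
  -- factorization over coordinates
  have hfact : ∀ π : Pol,
      ∑ ω : Fin T → (Fin K × Bool) × Bool, w ω * Real.exp (lam * ∑ t, f t π (ω t))
        = ∏ t : Fin T, ∑ a : (Fin K × Bool) × Bool, p a * Real.exp (lam * f t π a) := by
    intro π
    have h := Finset.prod_univ_sum (fun _ : Fin T => (univ : Finset ((Fin K × Bool) × Bool)))
      (fun t a => p a * Real.exp (lam * f t π a))
    rw [Fintype.piFinset_univ] at h
    rw [h]
    refine Finset.sum_congr rfl fun ω _ => ?_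
    show (∏ t : Fin T, p (ω t)) * Real.exp (lam * ∑ t, f t π (ω t))
      = ∏ t : Fin T, p (ω t) * Real.exp (lam * f t π (ω t))
    rw [Finset.mul_sum, Real.exp_sum, ← Finset.prod_mul_distrib]
  -- per-coordinate MGF bound
  have hx0 : 0 ≤ lam * K / γ := by positivity
  have hxle : lam * K / γ ≤ Real.sqrt 2 := by
    rw [div_le_iff₀ hγ0]
    calc lam * K ≤ (Real.sqrt 2 * γ / K) * K :=
          mul_le_mul_of_nonneg_right hlamle hK0.le
      _ = Real.sqrt 2 * γ := by field_simp
  have hx2 : (lam * K / γ) ^ 2 ≤ 2 := by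
    calc (lam * K / γ) ^ 2 ≤ Real.sqrt 2 ^ 2 := by
          exact pow_le_pow_left₀ hx0 hxle 2
      _ = 2 := Real.sq_sqrt (by norm_num)
  have hcosh := coshB hx0 hx2
  have hcoord : ∀ (t : Fin T) (π : Pol),
      ∑ a : (Fin K × Bool) × Bool, p a * Real.exp (lam * f t π a) ≤ Real.exp (lam ^ 2 * K / γ) := by
    intro t π
    have hsum : ∑ a : (Fin K × Bool) × Bool, p a * Real.exp (lam * f t π a)
        = (γ / (2 * K)) * (Real.exp (lam * K / γ) + Real.exp (-(lam * K / γ)))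
          + (1 - γ) / K + ((K : ℝ) - 1) / K := by
      simp only [hp, hf]
      rw [Fintype.sum_prod_type, Fintype.sum_prod_type]
      rw [← Finset.add_sum_erase _ _ (Finset.mem_univ (y t π))]
      have herase : ∑ i ∈ univ.erase (y t π), ∑ b : Bool, ∑ c : Bool,
          ((1 / (2 * (K : ℝ)) * if c then γ else 1 - γ) *
            Real.exp (lam * ((if c then (K : ℝ) / γ else 0) *
              (if i = y t π then (if b then (1:ℝ) else -1) else 0))))
          = ((K : ℝ) - 1) / K := by
        have hconst : ∀ i ∈ univ.erase (y t π), (∑ b : Bool, ∑ c : Bool,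
            ((1 / (2 * (K : ℝ)) * if c then γ else 1 - γ) *
              Real.exp (lam * ((if c then (K : ℝ) / γ else 0) *
                (if i = y t π then (if b then (1:ℝ) else -1) else 0)))))
            = 1 / (K : ℝ) := by
          intro i hi
          have hij : i ≠ y t π := Finset.ne_of_mem_erase hi
          simp only [hij, if_false, Fintype.sum_bool, if_true, mul_zero, zero_mul,
            Real.exp_zero, mul_one]
          field_simp
          norm_num
        rw [Finset.sum_congr rfl hconst, Finset.sum_const,
          Finset.card_erase_of_mem (mem_univ (y t π)), Finset.card_univ,
          Fintype.card_fin, nsmul_eq_mul]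
        push_cast [Nat.cast_sub hK]
        field_simp
      rw [herase]
      have e1 : lam * ((K : ℝ) / γ * 1) = lam * K / γ := by ring
      have e2 : lam * ((K : ℝ) / γ * -1) = -(lam * K / γ) := by ring
      simp only [Fintype.sum_bool, if_true, if_false, if_pos rfl, mul_zero, zero_mul,
        Real.exp_zero, mul_one, e1, e2, Bool.false_eq_true]
      field_simp
      ring
    have hM : (γ / (2 * K)) * (Real.exp (lam * K / γ) + Real.exp (-(lam * K / γ)))
        + (1 - γ) / K + ((K : ℝ) - 1) / K ≤ 1 + lam ^ 2 * K / γ := by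
      have hgk : (γ / K) * (lam * K / γ) ^ 2 = lam ^ 2 * K / γ := by
        field_simp
      have h1 : (γ / (2 * K)) * (Real.exp (lam * K / γ) + Real.exp (-(lam * K / γ)))
          ≤ (γ / (2 * K)) * (2 + 2 * (lam * K / γ) ^ 2) := by
        apply mul_le_mul_of_nonneg_left hcosh; positivity
      have h2 : (γ / (2 * K)) * (2 + 2 * (lam * K / γ) ^ 2) + (1 - γ) / K
          + ((K : ℝ) - 1) / K = 1 + (γ / K) * (lam * K / γ) ^ 2 := by
        field_simp; ring
      rw [← hgk]; linarith
    rw [hsum]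
    exact hM.trans (by linarith [Real.add_one_le_exp (lam ^ 2 * K / γ)])
  -- assemble
  set E := ∑ ω : Fin T → (Fin K × Bool) × Bool, w ω * S ω with hE
  have hcard : (0 : ℝ) < Fintype.card Pol := by
    exact_mod_cast Fintype.card_pos
  have hchain : Real.exp (lam * E) ≤
      (Fintype.card Pol : ℝ) * Real.exp (T * (lam ^ 2 * K / γ)) := by
    calc Real.exp (lam * E) = Real.exp (∑ ω : Fin T → (Fin K × Bool) × Bool, w ω * (lam * S ω)) := by
          rw [hE, Finset.mul_sum]
          exact congrArg Real.exp (Finset.sum_congr rfl fun ω _ => by ring)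
      _ ≤ ∑ ω : Fin T → (Fin K × Bool) × Bool, w ω * Real.exp (lam * S ω) := hjensen
      _ ≤ ∑ ω : Fin T → (Fin K × Bool) × Bool, w ω * ∑ π : Pol, Real.exp (lam * ∑ t, f t π (ω t)) :=
          Finset.sum_le_sum fun ω _ =>
            mul_le_mul_of_nonneg_left (hstep3 ω) (hw0 ω)
      _ = ∑ π : Pol, ∑ ω : Fin T → (Fin K × Bool) × Bool, w ω * Real.exp (lam * ∑ t, f t π (ω t)) := by
          simp_rw [Finset.mul_sum]; rw [Finset.sum_comm]
      _ = ∑ π : Pol, ∏ t : Fin T, ∑ a : (Fin K × Bool) × Bool, p a * Real.exp (lam * f t π a) := by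
          exact Finset.sum_congr rfl fun π _ => hfact π
      _ ≤ ∑ π : Pol, ∏ t : Fin T, Real.exp (lam ^ 2 * K / γ) := by
          refine Finset.sum_le_sum fun π _ => ?_
          refine Finset.prod_le_prod (fun t _ => ?_) (fun t _ => hcoord t π)
          exact Finset.sum_nonneg fun a _ =>
            mul_nonneg (hp0 a) (Real.exp_pos _).le
      _ = (Fintype.card Pol : ℝ) * Real.exp (T * (lam ^ 2 * K / γ)) := by
          rw [Finset.prod_const, Finset.sum_const, Finset.card_univ, Finset.card_univ,
            nsmul_eq_mul, ← Real.exp_nat_mul, Fintype.card_fin]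
  have hlog : lam * E ≤ Real.log (Fintype.card Pol) + T * (lam ^ 2 * K / γ) := by
    have h1 := Real.log_le_log (Real.exp_pos _) hchain
    rwa [Real.log_exp, Real.log_mul (ne_of_gt hcard) (Real.exp_ne_zero _),
      Real.log_exp] at h1
  have hdiv : E ≤ (Real.log (Fintype.card Pol) + T * (lam ^ 2 * K / γ)) / lam := by
    rw [le_div_iff₀ hlam]
    linarith [hlog, mul_comm lam E]
  refine hdiv.trans (le_of_eq ?_)
  field_simp
end

section
/- Let K ≥ 1 and T ≥ 1 be integers, let Π be a finite nonempty set of policies, and for each t ∈ {1,…,T} let y_t : Π → {1,…,K} be a fixed map. Let z_1,…,z_T ≥ 0 be fixed real numbers and let ε_1,…,ε_T be independent one-hot Rademacher random vectors in ℝ^K. Then for every λ > 0: E[ sup_{π ∈ Π} Σ_{t=1}^T z_t · ε_t(y_t(π)) ] ≤ log(|Π|)/λ + (1/(λK)) · Σ_{t=1}^T ( exp(λ²·z_t²/2) − 1 ). -/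
open Finset

lemma coord_bound (K : ℕ) (hK : 1 ≤ K) (x : ℝ) (j : Fin K) :
    ∑ a : Fin K × Bool, (1 / (2 * (K : ℝ))) *
      Real.exp (x * (if a.1 = j then (if a.2 then (1 : ℝ) else -1) else 0))
    = 1 + (Real.cosh x - 1) / K := by
  have hK0 : (0:ℝ) < K := by exact_mod_cast hK
  rw [Fintype.sum_prod_type]
  have : ∀ i : Fin K, ∑ b : Bool, (1 / (2 * (K : ℝ))) *
      Real.exp (x * (if i = j then (if b then (1 : ℝ) else -1) else 0))
      = (1 / (2 * (K : ℝ))) * (if i = j then Real.exp x + Real.exp (-x) else 2) := by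
    intro i
    rcases eq_or_ne i j with h | h <;>
      simp [h, Fintype.sum_bool, mul_one, mul_neg_one, mul_zero, Real.exp_zero] <;> ring
  rw [Finset.sum_congr rfl fun i _ => this i]
  have : ∀ i : Fin K, (1 / (2 * (K : ℝ))) * (if i = j then Real.exp x + Real.exp (-x) else 2)
      = (1 / (2 * (K : ℝ))) * 2
        + (if i = j then (1 / (2 * (K : ℝ))) * (Real.exp x + Real.exp (-x) - 2) else 0) := by
    intro i; rcases eq_or_ne i j with h | h <;> simp [h] <;> ring
  rw [Finset.sum_congr rfl fun i _ => this i, Finset.sum_add_distrib, Finset.sum_const,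
    Finset.sum_ite_eq' univ j, if_pos (mem_univ j), card_univ, Fintype.card_fin]
  rw [Real.cosh_eq]
  rw [nsmul_eq_mul]
  field_simp

/-- conditional maximal inequality for one-hot Rademacher
vectors.  The independent one-hot Rademacher vectors `ε_1, …, ε_T` are modeled
by the uniform sample space `Fin T → Fin K × Bool`, each sample having
probability `∏ t, 1/(2K)`; `ε_t(j) = (if j = i_t then ±1 else 0)`. -/
theorem stmt_4 (K T : ℕ) (hK : 1 ≤ K) (hT : 1 ≤ T)
    (Pol : Type) [Fintype Pol] [Nonempty Pol]
    (y : Fin T → Pol → Fin K)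
    (z : Fin T → ℝ) (hz : ∀ t, 0 ≤ z t) :
    ∀ lam : ℝ, 0 < lam →
      ∑ ω : Fin T → Fin K × Bool,
          (∏ _t : Fin T, (1 / (2 * (K : ℝ)))) *
            (univ.sup' univ_nonempty fun π : Pol =>
              ∑ t : Fin T,
                z t * (if (ω t).1 = y t π then (if (ω t).2 then (1 : ℝ) else -1) else 0))
        ≤ Real.log (Fintype.card Pol) / lam
            + (1 / (lam * K)) * ∑ t : Fin T, (Real.exp (lam ^ 2 * z t ^ 2 / 2) - 1) := by
  intro lam hlam
  have hK0 : (0:ℝ) < K := by exact_mod_cast hK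
  set p : ℝ := ∏ _t : Fin T, (1 / (2 * (K : ℝ))) with hpdef
  have hp_pos : 0 < p := Finset.prod_pos fun _ _ => by positivity
  have hw_sum : ∑ _ω : Fin T → Fin K × Bool, p = 1 := by
    rw [Finset.sum_const, card_univ, hpdef, Finset.prod_const, nsmul_eq_mul]
    have hcard : (Fintype.card (Fin T → Fin K × Bool) : ℝ) = (2 * (K:ℝ)) ^ T := by
      simp [Fintype.card_fun]; push_cast; ring
    rw [hcard, card_univ, Fintype.card_fin, ← mul_pow]
    rw [mul_one_div, div_self (by positivity), one_pow]
  -- notation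
  set S : Pol → (Fin T → Fin K × Bool) → ℝ := fun π ω =>
    ∑ t : Fin T, z t * (if (ω t).1 = y t π then (if (ω t).2 then (1 : ℝ) else -1) else 0)
    with hSdef
  set G : (Fin T → Fin K × Bool) → ℝ := fun ω => univ.sup' univ_nonempty fun π => S π ω
    with hGdef
  set c : Fin T → ℝ := fun t => Real.exp (lam ^ 2 * z t ^ 2 / 2) - 1 with hcdef
  have hc_nonneg : ∀ t, 0 ≤ c t := fun t => by
    have h1 : (1:ℝ) ≤ Real.exp (lam ^ 2 * z t ^ 2 / 2) := Real.one_le_exp (by positivity)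
    simp only [hcdef]; linarith
  set B : ℝ := (Fintype.card Pol : ℝ) * Real.exp (∑ t : Fin T, c t / K) with hBdef
  have hcardPol : (0:ℝ) < (Fintype.card Pol : ℝ) := by
    exact_mod_cast Fintype.card_pos
  have hB_pos : 0 < B := mul_pos hcardPol (Real.exp_pos _)
  -- Jensen
  have jensen : Real.exp (∑ ω : Fin T → Fin K × Bool, p • (lam * G ω))
      ≤ ∑ ω : Fin T → Fin K × Bool, p • Real.exp (lam * G ω) :=
    convexOn_exp.map_sum_le (fun _ _ => hp_pos.le) hw_sum (fun _ _ => Set.mem_univ _)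
  -- bound Q ≤ B
  have hQB : ∑ ω : Fin T → Fin K × Bool, p • Real.exp (lam * G ω) ≤ B := by
    have step1 : ∀ ω, Real.exp (lam * G ω) ≤ ∑ π : Pol, Real.exp (lam * S π ω) := by
      intro ω
      obtain ⟨π0, -, hπ0⟩ := Finset.exists_mem_eq_sup' (univ_nonempty (α := Pol))
        (fun π => S π ω)
      have : G ω = S π0 ω := hπ0
      rw [this]
      exact Finset.single_le_sum (f := fun π => Real.exp (lam * S π ω))
        (fun _ _ => (Real.exp_pos _).le) (mem_univ π0)
    have step2 : ∑ ω : Fin T → Fin K × Bool, p • Real.exp (lam * G ω)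
        ≤ ∑ π : Pol, ∑ ω : Fin T → Fin K × Bool, p * Real.exp (lam * S π ω) := by
      rw [Finset.sum_comm]
      refine Finset.sum_le_sum fun ω _ => ?_
      rw [smul_eq_mul, ← Finset.mul_sum]
      exact mul_le_mul_of_nonneg_left (step1 ω) hp_pos.le
    refine step2.trans ?_
    -- factorize each π-term
    have factor : ∀ π : Pol, ∑ ω : Fin T → Fin K × Bool, p * Real.exp (lam * S π ω)
        = ∏ t : Fin T, (1 + (Real.cosh (lam * z t) - 1) / K) := by
      intro π
      have : ∀ ω : Fin T → Fin K × Bool, p * Real.exp (lam * S π ω)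
          = ∏ t : Fin T, ((1 / (2 * (K : ℝ))) *
            Real.exp ((lam * z t) *
              (if (ω t).1 = y t π then (if (ω t).2 then (1 : ℝ) else -1) else 0))) := by
        intro ω
        rw [hpdef, hSdef, Finset.mul_sum, Real.exp_sum, ← Finset.prod_mul_distrib]
        congr 1; funext t; congr 2; ring
      rw [Finset.sum_congr rfl fun ω _ => this ω]
      have := Finset.sum_prod_piFinset (ι := Fin T) (κ := Fin K × Bool)
        (univ : Finset (Fin K × Bool))
        (fun t a => (1 / (2 * (K : ℝ))) *
          Real.exp ((lam * z t) * (if a.1 = y t π then (if a.2 then (1 : ℝ) else -1) else 0)))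
      rw [Fintype.piFinset_univ] at this
      rw [this]
      exact Finset.prod_congr rfl fun t _ => coord_bound K hK (lam * z t) (y t π)
    rw [Finset.sum_congr rfl fun π _ => factor π, Finset.sum_const, card_univ, nsmul_eq_mul,
      hBdef]
    refine mul_le_mul_of_nonneg_left ?_ hcardPol.le
    rw [Real.exp_sum]
    refine Finset.prod_le_prod (fun t _ => ?_) (fun t _ => ?_)
    · have h1 := Real.one_le_cosh (lam * z t)
      have h2 : (0:ℝ) ≤ (Real.cosh (lam * z t) - 1) / K :=
        div_nonneg (by linarith) hK0.le
      linarith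
    · refine le_trans ?_ (Real.add_one_le_exp _)
      rw [add_comm]
      gcongr
      have hcosh : Real.cosh (lam * z t) ≤ Real.exp ((lam * z t) ^ 2 / 2) :=
        Real.cosh_le_exp_half_sq _
      have hx : (lam * z t) ^ 2 = lam ^ 2 * z t ^ 2 := by ring
      rw [hx] at hcosh
      simp [hcdef]; linarith
  -- conclude
  have hE : lam * (∑ ω : Fin T → Fin K × Bool, p * G ω)
      = ∑ ω : Fin T → Fin K × Bool, p • (lam * G ω) := by
    rw [Finset.mul_sum]; exact Finset.sum_congr rfl fun ω _ => by rw [smul_eq_mul]; ring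
  have hlog : lam * (∑ ω : Fin T → Fin K × Bool, p * G ω) ≤ Real.log B := by
    rw [hE, Real.le_log_iff_exp_le hB_pos]
    exact jensen.trans hQB
  have hlogB : Real.log B = Real.log (Fintype.card Pol) + ∑ t : Fin T, c t / K := by
    rw [hBdef, Real.log_mul (ne_of_gt hcardPol) (Real.exp_ne_zero _), Real.log_exp]
  have final : ∑ ω : Fin T → Fin K × Bool, p * G ω ≤ Real.log B / lam :=
    (le_div_iff₀' hlam).mpr hlog
  refine final.trans ?_
  rw [hlogB]
  rw [add_div]
  have hlam' : lam ≠ 0 := hlam.ne'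
  have hK' : (K:ℝ) ≠ 0 := hK0.ne'
  have heq : (∑ t : Fin T, c t / K) / lam = 1 / (lam * K) * ∑ t : Fin T, c t := by
    rw [← Finset.sum_div, div_div, mul_comm (K:ℝ) lam, one_div, inv_mul_eq_div]
  rw [heq]
end

section
/- Let K ≥ 1 be an integer, γ ∈ (0,1], Π a finite nonempty set of policies, y : Π → {1,…,K} a fixed map, and A : Π → ℝ an arbitrary function. Let D = { (K/γ)·e_i : i ∈ {1,…,K} } ∪ { 0 } ⊂ ℝ^K, where e_i is the i-th standard basis vector, and let Δ'_D be the set of probability distributions p on D satisfying p( (K/γ)·e_i ) ≤ γ/K for every i ∈ {1,…,K}. Let δ be a Rademacher sign (uniform on {−1,+1}) independent of everything else, let ε be a one-hot Rademacher random vector in ℝ^K, and let Z take the value K/γ with probability γ and 0 with probability 1−γ, independent of ε. Then sup_{p ∈ Δ'_D} E_{ĉ ∼ p, δ}[ sup_{π ∈ Π} ( 2·δ·ĉ(y(π)) + A(π) ) ] ≤ E_{ε, Z}[ sup_{π ∈ Π} ( 2·Z·ε(y(π)) + A(π) ) ]. -/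
open Finset

/-- Lemma 4.6 of the paper, the new symmetrization step.
A distribution `p ∈ Δ'_D` on `D = {(K/γ)·e_i : i} ∪ {0}` is parametrized by its
weights `p i` on the points `(K/γ)·e_i`, with the remaining mass `1 - ∑ i, p i`
on `0`; the constraint is `0 ≤ p i ≤ γ/K`.  The supremum over `p ∈ Δ'_D` is
expressed by universally quantifying over such `p`.  On the left, the
expectation over `ĉ ∼ p` and the independent sign `δ` (uniform on `±1`) is
written out; note `ĉ(y(π)) = (K/γ)·1[y(π) = i]` on the atom `(K/γ)·e_i` and
`ĉ(y(π)) = 0` on the atom `0`.  On the right, `(ε, Z)` is modeled on the sample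
space `(Fin K × Bool) × Bool` with weight `(1/(2K))·(γ or 1-γ)`. -/
theorem stmt_5 (K : ℕ) (hK : 1 ≤ K) (γ : ℝ) (hγ0 : 0 < γ) (hγ1 : γ ≤ 1)
    (Pol : Type) [Fintype Pol] [Nonempty Pol] (y : Pol → Fin K) (A : Pol → ℝ) :
    ∀ p : Fin K → ℝ, (∀ i, 0 ≤ p i) → (∀ i, p i ≤ γ / K) → (∑ i, p i ≤ 1) →
      (∑ b : Bool, (1 / 2 : ℝ) *
          ((1 - ∑ i, p i) * (univ.sup' univ_nonempty fun π : Pol => 2 * (if b then (1 : ℝ) else -1) * 0 + A π)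
            + ∑ i : Fin K, p i *
                (univ.sup' univ_nonempty fun π : Pol =>
                  2 * (if b then (1 : ℝ) else -1) * ((K : ℝ) / γ * (if y π = i then 1 else 0)) + A π)))
        ≤ ∑ ω : (Fin K × Bool) × Bool,
            ((1 / (2 * (K : ℝ))) * (if ω.2 then γ else 1 - γ)) *
              (univ.sup' univ_nonempty fun π : Pol =>
                2 * (if ω.2 then (K : ℝ) / γ else 0) *
                    (if ω.1.1 = y π then (if ω.1.2 then (1 : ℝ) else -1) else 0) + A π) := by
  intro p hp0 hpu hps
  have hKpos : (0:ℝ) < K := by exact_mod_cast Nat.lt_of_lt_of_le Nat.zero_lt_one hK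
  set S : ℝ := univ.sup' univ_nonempty A with hSdef
  set T : Fin K → Bool → ℝ := fun i b => univ.sup' univ_nonempty fun π : Pol =>
    2 * (if b then (1:ℝ) else -1) * ((K:ℝ)/γ * (if y π = i then 1 else 0)) + A π with hTdef
  have hTS : ∀ i : Fin K, 2 * S ≤ T i true + T i false := by
    intro i
    obtain ⟨π, -, hπ⟩ := Finset.exists_mem_eq_sup' (univ_nonempty (α := Pol)) A
    have h1 : 2 * (1:ℝ) * ((K:ℝ)/γ * (if y π = i then 1 else 0)) + A π ≤ T i true :=
      Finset.le_sup' (f := fun π : Pol =>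
        2 * (if (true:Bool) then (1:ℝ) else -1) * ((K:ℝ)/γ * (if y π = i then 1 else 0)) + A π)
        (Finset.mem_univ π)
    have h2 : 2 * (-1:ℝ) * ((K:ℝ)/γ * (if y π = i then 1 else 0)) + A π ≤ T i false :=
      Finset.le_sup' (f := fun π : Pol =>
        2 * (if (false:Bool) then (1:ℝ) else -1) * ((K:ℝ)/γ * (if y π = i then 1 else 0)) + A π)
        (Finset.mem_univ π)
    rw [hSdef, hπ]; linarith
  have hL : (∑ b : Bool, (1 / 2 : ℝ) *
          ((1 - ∑ i, p i) * (univ.sup' univ_nonempty fun π : Pol => 2 * (if b then (1 : ℝ) else -1) * 0 + A π)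
            + ∑ i : Fin K, p i *
                (univ.sup' univ_nonempty fun π : Pol =>
                  2 * (if b then (1 : ℝ) else -1) * ((K : ℝ) / γ * (if y π = i then 1 else 0)) + A π)))
      = (1 - ∑ i, p i) * S + ∑ i, p i * ((T i true + T i false) / 2) := by
    rw [Fintype.sum_bool]
    have hS' : ∀ b : Bool, (univ.sup' univ_nonempty fun π : Pol =>
        2 * (if b then (1 : ℝ) else -1) * 0 + A π) = S := by
      intro b
      simp [hSdef]
    rw [hS' true, hS' false]
    rw [show ∀ (x u v : ℝ), (1/2) * (x + u) + (1/2) * (x + v) = x + (1/2) * (u + v) from by intros; ring]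
    rw [← Finset.sum_add_distrib, Finset.mul_sum]
    congr 1
    apply Finset.sum_congr rfl
    intro i _
    ring
  rw [hL]
  have hR : (∑ ω : (Fin K × Bool) × Bool,
            ((1 / (2 * (K : ℝ))) * (if ω.2 then γ else 1 - γ)) *
              (univ.sup' univ_nonempty fun π : Pol =>
                2 * (if ω.2 then (K : ℝ) / γ else 0) *
                    (if ω.1.1 = y π then (if ω.1.2 then (1 : ℝ) else -1) else 0) + A π))
      = (1 - γ) * S + ∑ i, (γ / K) * ((T i true + T i false) / 2) := by
    rw [Fintype.sum_prod_type]
    have hinner : ∀ ib : Fin K × Bool,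
        (∑ z : Bool, ((1 / (2 * (K : ℝ))) * (if z then γ else 1 - γ)) *
          (univ.sup' univ_nonempty fun π : Pol =>
            2 * (if z then (K : ℝ) / γ else 0) *
                (if ib.1 = y π then (if ib.2 then (1 : ℝ) else -1) else 0) + A π))
        = (1 / (2 * (K:ℝ))) * γ * T ib.1 ib.2 + (1 / (2 * (K:ℝ))) * (1 - γ) * S := by
      intro ib
      rw [Fintype.sum_bool]
      have e1 : (univ.sup' univ_nonempty fun π : Pol =>
          2 * ((K : ℝ) / γ) * (if ib.1 = y π then (if ib.2 then (1 : ℝ) else -1) else 0) + A π)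
          = T ib.1 ib.2 := by
        apply Finset.sup'_congr _ rfl
        intro π _
        have hiff : (if ib.1 = y π then (if ib.2 then (1:ℝ) else -1) else 0)
            = (if ib.2 then (1:ℝ) else -1) * (if y π = ib.1 then 1 else 0) := by
          by_cases h : y π = ib.1
          · rw [if_pos h.symm, if_pos h, mul_one]
          · rw [if_neg (fun hh => h hh.symm), if_neg h, mul_zero]
        rw [hiff]
        ring
      have e2 : (univ.sup' univ_nonempty fun π : Pol =>
          2 * (0:ℝ) * (if ib.1 = y π then (if ib.2 then (1 : ℝ) else -1) else 0) + A π) = S := by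
        simp [hSdef]
      simp only [if_true, Bool.false_eq_true, if_false]
      rw [e1, e2]
    rw [Finset.sum_congr rfl (fun ib _ => hinner ib)]
    rw [Fintype.sum_prod_type]
    simp only [Fintype.sum_bool, Finset.sum_add_distrib, Finset.sum_const, Finset.card_univ,
      Fintype.card_fin, nsmul_eq_mul]
    have hmerge : (∑ i, (γ / K) * ((T i true + T i false) / 2))
        = (∑ i, (1 / (2 * (K:ℝ))) * γ * T i true) + (∑ i, (1 / (2 * (K:ℝ))) * γ * T i false) := by
      rw [← Finset.sum_add_distrib]
      apply Finset.sum_congr rfl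
      intro i _
      field_simp
    rw [hmerge]
    simp only [Fintype.card_bool]
    field_simp
    ring
  rw [hR]
  -- final comparison
  have hterm : ∀ i ∈ (univ : Finset (Fin K)),
      p i * ((T i true + T i false) / 2) - p i * S
        ≤ (γ / K) * ((T i true + T i false) / 2) - (γ / K) * S := by
    intro i _
    have hM : 0 ≤ (T i true + T i false) / 2 - S := by linarith [hTS i]
    have := mul_le_mul_of_nonneg_right (hpu i) hM
    nlinarith [this]
  have hsum := Finset.sum_le_sum hterm
  rw [Finset.sum_sub_distrib, Finset.sum_sub_distrib, ← Finset.sum_mul, ← Finset.sum_mul] at hsum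
  have hγsum : (∑ _i : Fin K, γ / (K:ℝ)) = γ := by
    rw [Finset.sum_const, Finset.card_univ, Fintype.card_fin, nsmul_eq_mul]
    field_simp
  rw [hγsum] at hsum
  linarith [hsum]
end

section
/- Let K ≥ 1 be an integer, Π a finite nonempty set of policies, y : Π → {1,…,K} a fixed map, and A : Π → ℝ an arbitrary function. Let p be any finitely supported probability distribution on ℝ^K, let ĉ ∼ p, and let δ be a Rademacher sign (uniform on {−1,+1}) independent of ĉ. Then min_{i ∈ {1,…,K}} E_{ĉ ∼ p}[ ĉ(i) + sup_{π ∈ Π} ( A(π) − ĉ(y(π)) ) ] ≤ E_{ĉ ∼ p, δ}[ sup_{π ∈ Π} ( 2·δ·ĉ(y(π)) + A(π) ) ]. -/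
open Finset

/-- per-distribution symmetrization chain from the proof of
Lemma 4.5.  The finitely supported distribution `p` on `ℝ^K` is parametrized
by a finite index type `ι` with weights `w a ≥ 0` summing to `1` and atoms
`v a : Fin K → ℝ`.  The sign `δ` is uniform on `±1` and independent of `ĉ`. -/
theorem stmt_6 (K : ℕ) (hK : 1 ≤ K)
    (Pol : Type) [Fintype Pol] [Nonempty Pol] (y : Pol → Fin K) (A : Pol → ℝ)
    (ι : Type) [Fintype ι] (w : ι → ℝ) (hw0 : ∀ a, 0 ≤ w a) (hw1 : ∑ a, w a = 1)
    (v : ι → Fin K → ℝ) :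
    (univ.inf' (univ_nonempty_iff.mpr ⟨⟨0, hK⟩⟩) fun i : Fin K =>
        ∑ a, w a * (v a i + univ.sup' univ_nonempty fun π : Pol => A π - v a (y π)))
      ≤ ∑ a, ∑ b : Bool, (w a * (1 / 2 : ℝ)) *
          (univ.sup' univ_nonempty fun π : Pol =>
            2 * (if b then (1 : ℝ) else -1) * v a (y π) + A π) := by
  classical
  set M : ι → ℝ := fun b => univ.sup' univ_nonempty fun π : Pol => A π - v b (y π) with hM
  set Sp : ι → ℝ := fun a => univ.sup' univ_nonempty fun π : Pol => 2 * v a (y π) + A π with hSpdef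
  set Sm : ι → ℝ := fun a => univ.sup' univ_nonempty fun π : Pol => (-2) * v a (y π) + A π with hSmdef
  have hex : ∀ b : ι, ∃ π : Pol, M b = A π - v b (y π) := by
    intro b
    obtain ⟨π, -, hπ⟩ := Finset.exists_mem_eq_sup' (univ_nonempty) (fun π : Pol => A π - v b (y π))
    exact ⟨π, hπ⟩
  choose g hg using hex
  have hSp_le : ∀ a (π : Pol), 2 * v a (y π) + A π ≤ Sp a := fun a π =>
    Finset.le_sup' (fun π : Pol => 2 * v a (y π) + A π) (mem_univ π)
  have hSm_le : ∀ a (π : Pol), (-2) * v a (y π) + A π ≤ Sm a := fun a π =>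
    Finset.le_sup' (fun π : Pol => (-2) * v a (y π) + A π) (mem_univ π)
  set T : ℝ := ∑ a, w a * (Sp a / 2) with hT
  -- key per-b bound
  have key : ∀ b : ι, (∑ a, w a * v a (y (g b))) + M b ≤ T + Sm b / 2 := by
    intro b
    have h1 : (∑ a, w a * v a (y (g b))) ≤ ∑ a, w a * (Sp a / 2 - A (g b) / 2) := by
      refine Finset.sum_le_sum fun a _ => mul_le_mul_of_nonneg_left ?_ (hw0 a)
      have := hSp_le a (g b); linarith
    have h2 : (∑ a, w a * (Sp a / 2 - A (g b) / 2)) = T - A (g b) / 2 := by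
      rw [hT]
      simp only [mul_sub, Finset.sum_sub_distrib, ← Finset.sum_mul, hw1, one_mul]
    have h3 : M b ≤ Sm b / 2 + A (g b) / 2 := by
      have := hSm_le b (g b); rw [hg b]; linarith
    linarith [h1, h2 ▸ h1, h3]
  -- main chain
  have hLHS : ∀ b : ι,
      (univ.inf' (univ_nonempty_iff.mpr ⟨⟨0, hK⟩⟩) fun i : Fin K =>
        ∑ a, w a * (v a i + M a)) ≤ ∑ a, w a * (v a (y (g b)) + M a) :=
    fun b => Finset.inf'_le _ (mem_univ _)
  set L : ℝ := univ.inf' (univ_nonempty_iff.mpr ⟨⟨0, hK⟩⟩) fun i : Fin K =>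
      ∑ a, w a * (v a i + M a) with hL
  have step1 : L ≤ ∑ b, w b * (∑ a, w a * (v a (y (g b)) + M a)) := by
    calc L = ∑ b, w b * L := by rw [← Finset.sum_mul, hw1, one_mul]
    _ ≤ ∑ b, w b * (∑ a, w a * (v a (y (g b)) + M a)) :=
      Finset.sum_le_sum fun b _ => mul_le_mul_of_nonneg_left (hLHS b) (hw0 b)
  have step2 : ∀ b : ι, ∑ a, w a * (v a (y (g b)) + M a)
      = (∑ a, w a * v a (y (g b))) + (∑ a, w a * M a) := by
    intro b
    simp [mul_add, Finset.sum_add_distrib]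
  have step3 : ∑ b, w b * ((∑ a, w a * v a (y (g b))) + (∑ a, w a * M a))
      = ∑ b, w b * ((∑ a, w a * v a (y (g b))) + M b) := by
    simp only [mul_add, Finset.sum_add_distrib]
    congr 1
    rw [← Finset.sum_mul, hw1, one_mul]
  have step4 : ∑ b, w b * ((∑ a, w a * v a (y (g b))) + M b) ≤ ∑ b, w b * (T + Sm b / 2) :=
    Finset.sum_le_sum fun b _ => mul_le_mul_of_nonneg_left (key b) (hw0 b)
  have step5 : ∑ b, w b * (T + Sm b / 2) = T + ∑ b, w b * (Sm b / 2) := by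
    simp only [mul_add, Finset.sum_add_distrib, ← Finset.sum_mul, hw1, one_mul]
  have hRHS : (∑ a, ∑ b : Bool, (w a * (1 / 2 : ℝ)) *
          (univ.sup' univ_nonempty fun π : Pol =>
            2 * (if b then (1 : ℝ) else -1) * v a (y π) + A π))
      = T + ∑ b, w b * (Sm b / 2) := by
    rw [hT, ← Finset.sum_add_distrib]
    refine Finset.sum_congr rfl fun a _ => ?_
    rw [Fintype.sum_bool]
    have e1 : (fun π : Pol => 2 * (if true then (1:ℝ) else -1) * v a (y π) + A π)
        = fun π : Pol => 2 * v a (y π) + A π := by funext π; norm_num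
    have e2 : (fun π : Pol => 2 * (if false then (1:ℝ) else -1) * v a (y π) + A π)
        = fun π : Pol => (-2) * v a (y π) + A π := by funext π; norm_num
    rw [e1, e2, hSpdef, hSmdef]
    ring
  calc L ≤ ∑ b, w b * (∑ a, w a * (v a (y (g b)) + M a)) := step1
  _ = ∑ b, w b * ((∑ a, w a * v a (y (g b))) + (∑ a, w a * M a)) := by
      exact Finset.sum_congr rfl fun b _ => by rw [step2 b]
  _ = ∑ b, w b * ((∑ a, w a * v a (y (g b))) + M b) := step3
  _ ≤ ∑ b, w b * (T + Sm b / 2) := step4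
  _ = T + ∑ b, w b * (Sm b / 2) := step5
  _ = _ := hRHS.symm
end

section
/- Let K ≥ 1 be an integer, γ ∈ (0,1], z_0 ∈ ℝ, and z : {1,…,K} → ℝ. Then the maximum, over all vectors p = (p(0), p(1), …, p(K)) of nonnegative reals with p(0) + Σ_{i=1}^K p(i) = 1 and p(i) ≤ γ/K for every i ∈ {1,…,K}, of the linear objective p(0)·z_0 + Σ_{i=1}^K p(i)·z_i equals z_0 + (γ/K)·Σ_{i=1}^K max(z_i − z_0, 0). -/
open Finset

/-- water-filling LP identity, Lemma 3.2 of the paper.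
The maximum over vectors `(p 0, p 1, …, p K)` of nonnegative reals summing to
`1`, with `p i ≤ γ/K` for `i ∈ {1,…,K}`, of `p 0 · z₀ + ∑ i, p i · z i` equals
`z₀ + (γ/K) · ∑ i, max (z i - z₀) 0`. -/
theorem stmt_9 (K : ℕ) (hK : 1 ≤ K) (γ : ℝ) (hγ0 : 0 < γ) (hγ1 : γ ≤ 1)
    (z0 : ℝ) (z : Fin K → ℝ) :
    IsGreatest
      {v : ℝ | ∃ p0 : ℝ, ∃ p : Fin K → ℝ,
        0 ≤ p0 ∧ (∀ i, 0 ≤ p i) ∧ p0 + ∑ i, p i = 1 ∧ (∀ i, p i ≤ γ / K) ∧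
        v = p0 * z0 + ∑ i, p i * z i}
      (z0 + (γ / K) * ∑ i, max (z i - z0) 0) := by
  have hK0 : (0:ℝ) < K := by exact_mod_cast Nat.lt_of_lt_of_le Nat.zero_lt_one hK
  have hgk : 0 < γ / K := div_pos hγ0 hK0
  constructor
  · -- membership: the water-filling vector
    set p : Fin K → ℝ := fun i => if 0 < z i - z0 then γ / K else 0 with hp_def
    have hpn : ∀ i, 0 ≤ p i := by
      intro i; simp only [hp_def]; split <;> [exact hgk.le; exact le_refl 0]
    have hcap : ∀ i, p i ≤ γ / K := by
      intro i; simp only [hp_def]; split <;> [exact le_refl _; exact hgk.le]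
    have hsle : ∑ i, p i ≤ γ := by
      calc ∑ i, p i ≤ ∑ _i : Fin K, γ / K := Finset.sum_le_sum fun i _ => hcap i
        _ = K * (γ / K) := by simp [Finset.sum_const, mul_comm]
        _ = γ := by field_simp
    refine ⟨1 - ∑ i, p i, p, ?_, hpn, by ring, hcap, ?_⟩
    · linarith
    · have hterm : ∀ i : Fin K, p i * (z i - z0) = (γ / K) * max (z i - z0) 0 := by
        intro i
        simp only [hp_def]
        split_ifs with h
        · rw [max_eq_left h.le]
        · rw [max_eq_right (not_lt.mp h)]
          ring
      have : ∑ i, p i * (z i - z0) = (γ / K) * ∑ i, max (z i - z0) 0 := by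
        rw [Finset.mul_sum]
        exact Finset.sum_congr rfl fun i _ => hterm i
      have hexp : ∑ i, p i * (z i - z0) = ∑ i, p i * z i - (∑ i, p i) * z0 := by
        rw [Finset.sum_mul, ← Finset.sum_sub_distrib]
        exact Finset.sum_congr rfl fun i _ => by ring
      rw [hexp] at this
      linarith
  · rintro v ⟨p0, p, hp0, hp, hsum, hcap, rfl⟩
    have hexp : ∑ i, p i * (z i - z0) = ∑ i, p i * z i - (∑ i, p i) * z0 := by
      rw [Finset.sum_mul, ← Finset.sum_sub_distrib]
      exact Finset.sum_congr rfl fun i _ => by ring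
    have hle : ∑ i, p i * (z i - z0) ≤ (γ / K) * ∑ i, max (z i - z0) 0 := by
      rw [Finset.mul_sum]
      apply Finset.sum_le_sum
      intro i _
      rcases le_or_gt (z i - z0) 0 with h | h
      · rw [max_eq_right h]
        have : p i * (z i - z0) ≤ 0 := mul_nonpos_of_nonneg_of_nonpos (hp i) h
        linarith
      · rw [max_eq_left h.le]
        exact mul_le_mul_of_nonneg_right (hcap i) h.le
    have h1 : p0 * z0 = z0 - (∑ i, p i) * z0 := by
      have : p0 = 1 - ∑ i, p i := by linarith
      rw [this]; ring
    linarith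
end
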